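/- (Continuous convergence bound for WR with variable splittings.) Suppose the continuous WR errors satisfy e^{(k+1)}(t) = K^{(k+1)}(t) e^{(k)}(t) + \int_0^t Kc^{(k+1)}(s) e^{(k)}(s) ds for t in [0,T], with e^{(k+1)}(0)=0. Let Kmax(t) := sup_k sup_{s in [0,t]} ||K^{(k)}(s)|| and Kcmax(t) := sup_k sup_{s in [0,t]} ||Kc^{(k)}(s)||, assumed finite. Then for all k, sup_{s in [0,t]} ||e^{(k)}(s)|| <= ( sum_{j=0}^k binom(k,j) Kmax(t)^{k-j} Kcmax(t)^j t^j / j! ) * sup_{s in [0,t]} ||e^{(0)}(s)||. -/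

import Mathlib

/-!
The bound `P k s = ∑ j ≤ k, (k choose j) a^(k-j) b^j s^j / j!` is the `k`-th iterate of the
majorant operator `f ↦ a f + b ∫₀ˢ f` applied to the constant `1`: by Pascal's rule,
`P (k+1) s = a P k s + b ∫₀ˢ P k`. Estimating the recursion term by term therefore gives
`‖e k s‖ ≤ P k s ⬝ E0` by induction on `k`, and `P k` is increasing in `s ≥ 0`.
-/

attribute [local instance] Matrix.linftyOpNormedRing

open Finset Set

noncomputable def wrErrorBound (a b : ℝ) (k : ℕ) (s : ℝ) : ℝ :=
  ∑ j ∈ range (k + 1), (k.choose j : ℝ) * a ^ (k - j) * b ^ j * s ^ j / (j.factorial : ℝ)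

section wrErrorBound

variable (a b : ℝ) (k : ℕ)

@[simp] lemma wrErrorBound_zero (s : ℝ) : wrErrorBound a b 0 s = 1 := by
  simp [wrErrorBound]

@[fun_prop] lemma continuous_wrErrorBound : Continuous (wrErrorBound a b k) := by
  unfold wrErrorBound
  fun_prop

lemma integral_wrErrorBound (s : ℝ) :
    ∫ σ in (0 : ℝ)..s, wrErrorBound a b k σ =
      ∑ j ∈ range (k + 1),
        (k.choose j : ℝ) * a ^ (k - j) * b ^ j * s ^ (j + 1) / ((j + 1).factorial : ℝ) := by
  unfold wrErrorBound
  rw [intervalIntegral.integral_finsetSum fun j _ => by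
    apply Continuous.intervalIntegrable; fun_prop]
  refine sum_congr rfl fun j _ => ?_
  simp only [intervalIntegral.integral_div, intervalIntegral.integral_const_mul, integral_pow,
    Nat.factorial_succ]
  push_cast
  field_simp
  ring

lemma wrErrorBound_succ (s : ℝ) :
    wrErrorBound a b (k + 1) s =
      a * wrErrorBound a b k s + b * ∫ σ in (0 : ℝ)..s, wrErrorBound a b k σ := by
  have pascal := sum_choose_succ_mul (fun i m => a ^ m * b ^ i * s ^ i / (i.factorial : ℝ)) k
  rw [integral_wrErrorBound]
  simp only [wrErrorBound, mul_sum]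
  refine (sum_congr rfl fun j _ => by ring).trans (pascal.trans ?_)
  congr 1 <;> refine sum_congr rfl fun j hj => ?_
  · rw [show k + 1 - j = k - j + 1 by grind]
    ring
  · ring

variable {a b}

lemma wrErrorBound_le_of_le (ha : 0 ≤ a) (hb : 0 ≤ b) {s t : ℝ} (hs : 0 ≤ s) (hst : s ≤ t) :
    wrErrorBound a b k s ≤ wrErrorBound a b k t := by
  unfold wrErrorBound
  gcongr

end wrErrorBound

theorem norm_le_wrErrorBound_mul {E : Type*} [NormedAddCommGroup E] [NormedSpace ℝ E]
    {u : ℕ → ℝ → E} {A B : ℕ → ℝ → E → E} {a b c t : ℝ} (ha : 0 ≤ a) (hb : 0 ≤ b)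
    (hrec : ∀ k, ∀ s ∈ Icc 0 t, u (k + 1) s = A k s (u k s) + ∫ σ in (0 : ℝ)..s, B k σ (u k σ))
    (hA : ∀ k, ∀ s ∈ Icc 0 t, ∀ v, ‖A k s v‖ ≤ a * ‖v‖)
    (hB : ∀ k, ∀ s ∈ Icc 0 t, ∀ v, ‖B k s v‖ ≤ b * ‖v‖)
    (h0 : ∀ s ∈ Icc 0 t, ‖u 0 s‖ ≤ c) (k : ℕ) :
    ∀ s ∈ Icc 0 t, ‖u k s‖ ≤ wrErrorBound a b k s * c := by
  induction k with
  | zero => simpa using h0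
  | succ k ih =>
    intro s hs
    have hintegral : ‖∫ σ in (0 : ℝ)..s, B k σ (u k σ)‖ ≤
        ∫ σ in (0 : ℝ)..s, b * (wrErrorBound a b k σ * c) := by
      refine intervalIntegral.norm_integral_le_of_norm_le hs.1 (MeasureTheory.ae_of_all _ fun σ hσ => ?_)
        (Continuous.intervalIntegrable (by fun_prop) _ _)
      have hσ' : σ ∈ Icc 0 t := ⟨hσ.1.le, hσ.2.trans hs.2⟩
      exact (hB k σ hσ' _).trans (mul_le_mul_of_nonneg_left (ih σ hσ') hb)
    calc ‖u (k + 1) s‖ = ‖A k s (u k s) + ∫ σ in (0 : ℝ)..s, B k σ (u k σ)‖ := by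
          rw [hrec k s hs]
      _ ≤ ‖A k s (u k s)‖ + ‖∫ σ in (0 : ℝ)..s, B k σ (u k σ)‖ := norm_add_le _ _
      _ ≤ a * (wrErrorBound a b k s * c) + ∫ σ in (0 : ℝ)..s, b * (wrErrorBound a b k σ * c) :=
          add_le_add ((hA k s hs _).trans (mul_le_mul_of_nonneg_left (ih s hs) ha)) hintegral
      _ = wrErrorBound a b (k + 1) s * c := by
          rw [wrErrorBound_succ, intervalIntegral.integral_const_mul,
            intervalIntegral.integral_mul_const]
          ring

theorem continuous_WR_variable_splitting_bound_general (d : ℕ) (T : ℝ)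
    (e : ℕ → ℝ → (Fin d → ℝ))
    (K Kc : ℕ → ℝ → Matrix (Fin d) (Fin d) ℝ)
    (hrec : ∀ k : ℕ, ∀ t ∈ Set.Icc (0 : ℝ) T,
      e (k + 1) t = (K (k + 1) t).mulVec (e k t) +
        ∫ s in (0 : ℝ)..t, (Kc (k + 1) s).mulVec (e k s)) :
    ∀ t ∈ Set.Icc (0 : ℝ) T, ∀ Kmax Kcmax E0 : ℝ,
      (∀ k : ℕ, ∀ s ∈ Set.Icc (0 : ℝ) t, ‖K k s‖ ≤ Kmax) →
      (∀ k : ℕ, ∀ s ∈ Set.Icc (0 : ℝ) t, ‖Kc k s‖ ≤ Kcmax) →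
      (∀ s ∈ Set.Icc (0 : ℝ) t, ‖e 0 s‖ ≤ E0) →
      ∀ k : ℕ, ∀ s ∈ Set.Icc (0 : ℝ) t,
        ‖e k s‖ ≤
          (∑ j ∈ Finset.range (k + 1),
            (k.choose j : ℝ) * Kmax ^ (k - j) * Kcmax ^ j * t ^ j / (j.factorial : ℝ)) * E0 := by
  intro t ht Kmax Kcmax E0 hK hKc hE0 k s hs
  have h0 : (0 : ℝ) ∈ Icc 0 t := ⟨le_rfl, ht.1⟩
  have hKmax : 0 ≤ Kmax := (norm_nonneg _).trans (hK 0 0 h0)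
  have hKcmax : 0 ≤ Kcmax := (norm_nonneg _).trans (hKc 0 0 h0)
  have hE0_nonneg : 0 ≤ E0 := (norm_nonneg _).trans (hE0 0 h0)
  have norm_mulVec_le {M : Matrix (Fin d) (Fin d) ℝ} {m : ℝ} (hM : ‖M‖ ≤ m) (v : Fin d → ℝ) :
      ‖M.mulVec v‖ ≤ m * ‖v‖ :=
    (Matrix.linfty_opNorm_mulVec M v).trans (mul_le_mul_of_nonneg_right hM (norm_nonneg v))
  calc ‖e k s‖ ≤ wrErrorBound Kmax Kcmax k s * E0 :=
        norm_le_wrErrorBound_mul (A := fun k s => (K (k + 1) s).mulVec)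
          (B := fun k s => (Kc (k + 1) s).mulVec) hKmax hKcmax
          (fun k s hs => hrec k s ⟨hs.1, hs.2.trans ht.2⟩)
          (fun k s hs => norm_mulVec_le (hK _ s hs)) (fun k s hs => norm_mulVec_le (hKc _ s hs))
          hE0 k s hs
    _ ≤ wrErrorBound Kmax Kcmax k t * E0 :=
        mul_le_mul_of_nonneg_right (wrErrorBound_le_of_le k hKmax hKcmax hs.1 hs.2) hE0_nonneg

/-- continuous convergence bound for WR with variable splittings.
If `e^{(k+1)}(t) = K^{(k+1)}(t) e^{(k)}(t) + ∫_0^t Kc^{(k+1)}(s) e^{(k)}(s) ds` on `[0,T]`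
with `e^{(k+1)}(0) = 0`, and `Kmax, Kcmax` bound `‖K^{(k)}‖, ‖Kc^{(k)}‖` on `[0,t]`
uniformly in `k`, then
`sup_{[0,t]} ‖e^{(k)}‖ ≤ (∑_{j=0}^k (k choose j) Kmax^{k-j} Kcmax^j t^j / j!) ⬝ sup_{[0,t]} ‖e^{(0)}‖`. -/
theorem continuous_WR_variable_splitting_bound (d : ℕ) (T : ℝ) (hT : 0 ≤ T)
    (e : ℕ → ℝ → (Fin d → ℝ))
    (K Kc : ℕ → ℝ → Matrix (Fin d) (Fin d) ℝ)
    (hint : ∀ k : ℕ, ∀ t ∈ Set.Icc (0 : ℝ) T,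
      IntervalIntegrable (fun s => (Kc (k + 1) s).mulVec (e k s)) MeasureTheory.volume 0 t)
    (hrec : ∀ k : ℕ, ∀ t ∈ Set.Icc (0 : ℝ) T,
      e (k + 1) t = (K (k + 1) t).mulVec (e k t) +
        ∫ s in (0 : ℝ)..t, (Kc (k + 1) s).mulVec (e k s))
    (hzero : ∀ k : ℕ, e (k + 1) 0 = 0) :
    ∀ t ∈ Set.Icc (0 : ℝ) T, ∀ Kmax Kcmax E0 : ℝ,
      (∀ k : ℕ, ∀ s ∈ Set.Icc (0 : ℝ) t, ‖K k s‖ ≤ Kmax) →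
      (∀ k : ℕ, ∀ s ∈ Set.Icc (0 : ℝ) t, ‖Kc k s‖ ≤ Kcmax) →
      (∀ s ∈ Set.Icc (0 : ℝ) t, ‖e 0 s‖ ≤ E0) →
      ∀ k : ℕ, ∀ s ∈ Set.Icc (0 : ℝ) t,
        ‖e k s‖ ≤
          (∑ j ∈ Finset.range (k + 1),
            (k.choose j : ℝ) * Kmax ^ (k - j) * Kcmax ^ j * t ^ j / (j.factorial : ℝ)) * E0 :=
  continuous_WR_variable_splitting_bound_general d T e K Kc hrec
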